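/- Let k be a positive even integer and let s be a vertex of an (s,k)-edge-connected finite graph G. If the degree of s is even and positive, then the complement of the k-lifting graph L(G,s,k) is disconnected. -/

import Mathlib

/-- A multigraph: parallel edges allowed, no loops. Each edge `e` has a pair of
distinct end-vertices `ends e`. -/
structure Multigraph (V : Type u) (E : Type v) where
  ends : E → Sym2 V
  no_loops : ∀ e : E, ¬ (ends e).IsDiag

namespace Multigraph

variable {V : Type u} {E : Type v}

/-- A walk in a multigraph, recorded as the sequence of traversed edges. -/
inductive Walk (G : Multigraph V E) : V → V → Type (max u v)
  | nil (v : V) : Walk G v v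
  | cons {u v w : V} (e : E) (h : G.ends e = s(u, v)) (p : Walk G v w) : Walk G u w

namespace Walk

variable {G : Multigraph V E}

/-- The list of edges traversed by a walk. -/
def edges : ∀ {a b : V}, G.Walk a b → List E
  | _, _, .nil _ => []
  | _, _, .cons e _ p => e :: p.edges

/-- The list of vertices visited by a walk. -/
def support : ∀ {a b : V}, G.Walk a b → List V
  | a, _, .nil _ => [a]
  | a, _, .cons _ _ p => a :: p.support

/-- A walk is a path if it has no repeated vertices. -/
def IsPath {a b : V} (p : G.Walk a b) : Prop := p.support.Nodup

end Walk

/-- `G` is `k`-edge-connected: between any two distinct vertices there are `k`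
pairwise edge-disjoint paths. -/
def EdgeConnected (G : Multigraph V E) (k : ℕ) : Prop :=
  ∀ u v : V, u ≠ v → ∃ P : Fin k → G.Walk u v,
    (∀ i, (P i).IsPath) ∧ ∀ i j, i ≠ j → ∀ e, e ∈ (P i).edges → e ∉ (P j).edges

/-- `G` is weakly `k`-linked: for every `k` pairs of vertices `(s i, t i)` with
`s i ≠ t i` there are pairwise edge-disjoint paths `P i` joining `s i` and `t i`. -/
def WeaklyLinked (G : Multigraph V E) (k : ℕ) : Prop :=
  ∀ s t : Fin k → V, (∀ i, s i ≠ t i) →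
    ∃ P : (i : Fin k) → G.Walk (s i) (t i),
      (∀ i, (P i).IsPath) ∧ ∀ i j, i ≠ j → ∀ e, e ∈ (P i).edges → e ∉ (P j).edges

end Multigraph

namespace Multigraph

variable {V : Type u} {E : Type v}

/-- `G` is `(s,k)`-edge-connected: between any two distinct vertices different
from `s` there are `k` pairwise edge-disjoint paths (possibly through `s`). -/
def SEdgeConnected (G : Multigraph V E) (s : V) (k : ℕ) : Prop :=
  ∀ u v : V, u ≠ s → v ≠ s → u ≠ v → ∃ P : Fin k → G.Walk u v,
    (∀ i, (P i).IsPath) ∧ ∀ i j, i ≠ j → ∀ e, e ∈ (P i).edges → e ∉ (P j).edges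

/-- The lift `G_{sx,sy}`: delete the edges `e₁ = sx` and `e₂ = sy` and add a new
edge joining `x` and `y`; if `x = y` no new edge is added (the loop is deleted). -/
def lift (G : Multigraph V E) (e₁ e₂ : E) (x y : V) :
    Multigraph V ({e : E // e ≠ e₁ ∧ e ≠ e₂} ⊕ PLift (x ≠ y)) where
  ends := Sum.elim (fun e => G.ends e.1) (fun _ => s(x, y))
  no_loops := by
    rintro (e | h)
    · exact G.no_loops e.1
    · intro hd
      exact h.down (Sym2.mk_isDiag_iff.mp hd)

/-- The pair of edges `e₁, e₂` incident with `s` is `k`-liftable: the lift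
`G_{e₁,e₂}` is `(s,k)`-edge-connected. -/
def Liftable (G : Multigraph V E) (s : V) (k : ℕ) (e₁ e₂ : E) : Prop :=
  e₁ ≠ e₂ ∧ ∃ x y : V, G.ends e₁ = s(s, x) ∧ G.ends e₂ = s(s, y) ∧
    (G.lift e₁ e₂ x y).SEdgeConnected s k

/-- The `k`-lifting graph `L(G,s,k)`: its vertices are the edges of `G` incident
with `s`, two of them being adjacent iff they form a `k`-liftable pair. -/
def liftingGraph (G : Multigraph V E) (s : V) (k : ℕ) :
    SimpleGraph {e : E // s ∈ G.ends e} where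
  Adj f₁ f₂ := G.Liftable s k f₁.1 f₂.1 ∨ G.Liftable s k f₂.1 f₁.1
  symm := ⟨fun _ _ h => h.symm⟩
  loopless := ⟨fun f h => by rcases h with h | h <;> exact h.1 rfl⟩

/-- The degree of a vertex: the number of edges incident with it. -/
noncomputable def degree (G : Multigraph V E) (v : V) : ℕ :=
  {e : E | v ∈ G.ends e}.ncard

end Multigraph


/-!
Call `X ⊆ V - s` dangerous if `X` and `V - s - X` are nonempty and `d(X) ≤ k + 1`, where `d(X)`
counts the edges leaving `X`. By Menger's theorem, `(s,k)`-edge-connectivity says `d(X) ≥ k` for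
all such `X`, and the lift of `sx, sy` is `(s,k)`-edge-connected unless some dangerous set
contains both `x` and `y`.

Because `k` and `deg(s)` are even, two dangerous sets sharing a neighbour of `s` have a dangerous
union (submodularity of `d` plus a parity count), so lying in a common dangerous set is a
transitive relation on the edges at `s`. A dangerous set receives at most half of the edges at
`s`, so this relation has at least two classes, and edges in different classes are adjacent in
`L(G,s,k)`: the complement of `L(G,s,k)` has no edge between classes.
-/

theorem List.exists_nodup_isChain_of_reflTransGen {α : Type*} {r : α → α → Prop} {a b : α}
    (h : Relation.ReflTransGen r a b) :
    ∃ l : List α, List.IsChain r (a :: l) ∧ (a :: l).getLast (List.cons_ne_nil _ _) = b ∧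
      (a :: l).Nodup := by
  induction h using Relation.ReflTransGen.head_induction_on with
  | refl => exact ⟨[], .singleton _, rfl, List.nodup_singleton _⟩
  | @head a c hac _ ih =>
    obtain ⟨l, hchain, hlast, hnodup⟩ := ih
    by_cases ha : a ∈ c :: l
    · obtain ⟨l₁, l₂, hsplit⟩ := List.append_of_mem ha
      simp only [hsplit] at hchain hlast hnodup
      refine ⟨l₂, hchain.suffix (List.suffix_append _ _), ?_,
        hnodup.sublist (List.sublist_append_right _ _)⟩
      rwa [List.getLast_append_of_ne_nil _ (List.cons_ne_nil _ _)] at hlast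
    · exact ⟨c :: l, .cons_cons hac hchain, by rwa [List.getLast_cons_cons],
        List.nodup_cons.mpr ⟨ha, hnodup⟩⟩

namespace Multigraph

open Finset Relation

open scoped Classical

variable {V : Type u} {E : Type v} {G : Multigraph V E}

theorem exists_ends_eq (G : Multigraph V E) (e : E) : ∃ p q, G.ends e = s(p, q) :=
  Sym2.ind (fun p q => ⟨p, q, rfl⟩) (G.ends e)

theorem ne_of_ends_eq {e : E} {p q : V} (h : G.ends e = s(p, q)) : p ≠ q := fun hpq =>
  G.no_loops e (by rw [h, hpq]; exact Sym2.mk_isDiag_iff.mpr rfl)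

section Cuts

variable [Fintype E]

variable (G) in
noncomputable def edgesBetween (A B : Set V) : Finset E :=
  {e | ∃ a ∈ A, ∃ b ∈ B, G.ends e = s(a, b)}

variable (G) in
noncomputable def cut (X : Set V) : Finset E := G.edgesBetween X Xᶜ

theorem mem_edgesBetween_of_ends_eq {A B : Set V} {e : E} {p q : V} (h : G.ends e = s(p, q)) :
    e ∈ G.edgesBetween A B ↔ p ∈ A ∧ q ∈ B ∨ q ∈ A ∧ p ∈ B := by
  simp only [edgesBetween, mem_filter, mem_univ, true_and, h, Sym2.eq_iff]
  constructor
  · rintro ⟨a, ha, b, hb, ⟨rfl, rfl⟩ | ⟨rfl, rfl⟩⟩ <;> tauto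
  · rintro (⟨hp, hq⟩ | ⟨hq, hp⟩)
    · exact ⟨p, hp, q, hq, .inl ⟨rfl, rfl⟩⟩
    · exact ⟨q, hq, p, hp, .inr ⟨rfl, rfl⟩⟩

theorem mem_cut_of_ends_eq {X : Set V} {e : E} {p q : V} (h : G.ends e = s(p, q)) :
    e ∈ G.cut X ↔ p ∈ X ∧ q ∉ X ∨ q ∈ X ∧ p ∉ X :=
  mem_edgesBetween_of_ends_eq h

variable (G)

theorem card_cut_compl (X : Set V) : #(G.cut Xᶜ) = #(G.cut X) := by
  congr 1
  ext e
  obtain ⟨p, q, h⟩ := G.exists_ends_eq e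
  simp only [mem_cut_of_ends_eq h, Set.mem_compl_iff, not_not]
  tauto

theorem card_cut_empty : #(G.cut ∅) = 0 := by
  simp [cut, edgesBetween]

theorem card_cut_submodular (X Y : Set V) :
    #(G.cut X) + #(G.cut Y) =
      #(G.cut (X ∪ Y)) + #(G.cut (X ∩ Y)) + 2 * #(G.edgesBetween (X \ Y) (Y \ X)) := by
  simp only [card_eq_sum_ite (subset_univ _), mul_sum, ← sum_add_distrib]
  refine sum_congr rfl fun e _ => ?_
  obtain ⟨p, q, h⟩ := G.exists_ends_eq e
  simp only [mem_cut_of_ends_eq h, mem_edgesBetween_of_ends_eq h, Set.mem_union,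
    Set.mem_inter_iff, Set.mem_sdiff]
  by_cases p ∈ X <;> by_cases p ∈ Y <;> by_cases q ∈ X <;> by_cases q ∈ Y <;> simp [*]

theorem card_cut_posimodular (X Y : Set V) :
    #(G.cut X) + #(G.cut Y) =
      #(G.cut (X \ Y)) + #(G.cut (Y \ X)) + 2 * #(G.edgesBetween (X ∩ Y) (X ∪ Y)ᶜ) := by
  have h := G.card_cut_submodular X Yᶜ
  rw [card_cut_compl, show X ∪ Yᶜ = (Y \ X)ᶜ by ext; simp; tauto, card_cut_compl,
    ← Set.sdiff_eq, Set.sdiff_compl, show Yᶜ \ X = (X ∪ Y)ᶜ by ext; simp; tauto] at h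
  omega

theorem card_cut_union_of_disjoint {A B : Set V} (hAB : Disjoint A B) :
    #(G.cut (A ∪ B)) + 2 * #(G.edgesBetween A B) = #(G.cut A) + #(G.cut B) := by
  rw [card_cut_submodular, hAB.inter_eq, card_cut_empty, hAB.sdiff_eq_left,
    hAB.sdiff_eq_right, add_zero]

theorem card_cut_singleton (v : V) : #(G.cut {v}) = G.degree v := by
  rw [degree, ← Set.ncard_coe_finset]
  congr 1
  ext e
  obtain ⟨p, q, h⟩ := G.exists_ends_eq e
  have hpq := ne_of_ends_eq h
  simp only [mem_coe, mem_cut_of_ends_eq h, Set.mem_singleton_iff, Set.mem_ofPred_eq, h,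
    Sym2.mem_iff]
  constructor
  · rintro (⟨rfl, -⟩ | ⟨rfl, -⟩) <;> simp
  · rintro (rfl | rfl) <;> simp [hpq, hpq.symm]

theorem card_edgesBetween_singleton_modular (s : V) (X Y : Set V) :
    #(G.edgesBetween {s} X) + #(G.edgesBetween {s} Y) =
      #(G.edgesBetween {s} (X ∪ Y)) + #(G.edgesBetween {s} (X ∩ Y)) := by
  simp only [card_eq_sum_ite (subset_univ _), ← sum_add_distrib]
  refine sum_congr rfl fun e _ => ?_
  obtain ⟨p, q, h⟩ := G.exists_ends_eq e
  have hpq := ne_of_ends_eq h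
  simp only [mem_edgesBetween_of_ends_eq h, Set.mem_singleton_iff, Set.mem_union,
    Set.mem_inter_iff]
  by_cases p = s <;> by_cases q = s <;> by_cases p ∈ X <;> by_cases q ∈ X <;>
    by_cases p ∈ Y <;> by_cases q ∈ Y <;> simp_all

theorem card_edgesBetween_singleton_eq_degree {s : V} {X : Set V}
    (hX : ∀ e w, G.ends e = s(s, w) → w ∈ X) : #(G.edgesBetween {s} X) = G.degree s := by
  rw [← card_cut_singleton]
  congr 1
  ext e
  obtain ⟨p, q, h⟩ := G.exists_ends_eq e
  have hpq := ne_of_ends_eq h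
  simp only [mem_edgesBetween_of_ends_eq h, mem_cut_of_ends_eq h, Set.mem_singleton_iff]
  constructor
  · rintro (⟨rfl, -⟩ | ⟨rfl, -⟩)
    · exact .inl ⟨rfl, hpq.symm⟩
    · exact .inr ⟨rfl, hpq⟩
  · rintro (⟨rfl, -⟩ | ⟨rfl, -⟩)
    · exact .inl ⟨rfl, hX e q h⟩
    · exact .inr ⟨rfl, hX e p (h.trans Sym2.eq_swap)⟩

end Cuts

namespace Walk

theorem mem_support_of_mem_edges {x : V} {e : E} :
    ∀ {a b : V} (W : G.Walk a b), e ∈ W.edges → x ∈ G.ends e → x ∈ W.support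
  | _, _, .nil _, he, _ => nomatch he
  | _, _, .cons e' h W, he, hx => by
    rcases List.mem_cons.mp he with rfl | he
    · rw [h, Sym2.mem_iff] at hx
      rcases hx with rfl | rfl
      · exact List.mem_cons_self
      · cases W <;> exact List.mem_cons_of_mem _ List.mem_cons_self
    · exact List.mem_cons_of_mem _ (W.mem_support_of_mem_edges he hx)

theorem exists_mem_edges_mem_cut [Fintype E] {X : Set V} :
    ∀ {a b : V} (W : G.Walk a b), a ∈ X → b ∉ X → ∃ e ∈ W.edges, e ∈ G.cut X
  | _, _, .nil _, ha, hb => absurd ha hb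
  | _, _, .cons (v := c) e h W, ha, hb => by
    by_cases hc : c ∈ X
    · obtain ⟨e', he', hcut⟩ := W.exists_mem_edges_mem_cut hc hb
      exact ⟨e', List.mem_cons_of_mem _ he', hcut⟩
    · exact ⟨e, List.mem_cons_self, (mem_cut_of_ends_eq h).mpr (.inl ⟨ha, hc⟩)⟩

end Walk

theorem le_card_cut_of_edgeDisjoint [Fintype E] {k : ℕ} {a b : V} {X : Set V} (ha : a ∈ X)
    (hb : b ∉ X) (P : Fin k → G.Walk a b)
    (hP : ∀ i j, i ≠ j → ∀ e, e ∈ (P i).edges → e ∉ (P j).edges) :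
    k ≤ #(G.cut X) := by
  choose f hfP hfX using fun i => (P i).exists_mem_edges_mem_cut ha hb
  have hf : Function.Injective f := fun i j hij => by
    by_contra hne
    exact hP i j hne _ (hfP i) (hij ▸ hfP j)
  simpa using card_le_card_of_injOn (s := univ) f (fun i _ => hfX i) hf.injOn

section Flow

/- A partial orientation `S : E → Option (V × V)` sends one unit of flow through `e` from `a`
to `b` when `S e = some (a, b)`, and none when `S e = none`; `excess S w` is the net inflow
at `w`. -/

noncomputable def unitExcess (a b : V) : V → ℤ := Pi.single b 1 - Pi.single a 1

noncomputable def flux : Option (V × V) → V → ℤ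
  | none => 0
  | some (a, b) => unitExcess a b

noncomputable def excess [Fintype E] (S : E → Option (V × V)) : V → ℤ := ∑ e, flux (S e)

variable (G)

def IsOrientation (S : E → Option (V × V)) : Prop :=
  ∀ e a b, S e = some (a, b) → G.ends e = s(a, b)

structure IsFlow [Fintype E] (S : E → Option (V × V)) (a b : V) (m : ℕ) : Prop where
  isOrientation : G.IsOrientation S
  excess_eq : excess S = (m : ℤ) • unitExcess a b

/-- A step of the residual graph through an edge of `F`: forwards along an unused edge, or
backwards along a used one. -/
def Residual (S : E → Option (V × V)) (F : Set E) (a b : V) : Prop :=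
  ∃ e ∈ F, G.ends e = s(a, b) ∧ (S e = none ∨ S e = some (b, a))

variable {G}

theorem unitExcess_add_unitExcess (a b c : V) :
    unitExcess a b + unitExcess b c = unitExcess a c := by
  simp only [unitExcess]
  abel

theorem unitExcess_swap (a b : V) : unitExcess b a = -unitExcess a b :=
  (neg_sub _ _).symm

theorem exists_flux_eq_add_unitExcess {o : Option (V × V)} {a b : V}
    (ho : o = none ∨ o = some (b, a)) :
    ∃ o', (o' = none ↔ o ≠ none) ∧ (∀ p q, o' = some (p, q) → p = a ∧ q = b) ∧
      flux o' = flux o + unitExcess a b := by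
  rcases ho with rfl | rfl
  · exact ⟨some (a, b), by simp, by simp, by simp [flux]⟩
  · exact ⟨none, by simp, by simp, by rw [flux, flux, unitExcess_swap, neg_add_cancel]⟩

variable [Fintype E]

theorem excess_update (S : E → Option (V × V)) (e : E) (o : Option (V × V)) :
    excess (Function.update S e o) = excess S - flux (S e) + flux o := by
  simp only [excess, ← add_sum_erase _ _ (mem_univ e), Function.update_self]
  rw [sum_congr rfl fun e' he' => by rw [Function.update_of_ne (ne_of_mem_erase he')]]
  abel

namespace IsOrientation

variable {S : E → Option (V × V)} {F : Set E}

theorem exists_augmentingPath_of_isChain (hS : G.IsOrientation S) :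
    ∀ (l : List V) {a b : V}, List.IsChain (G.Residual S F) (a :: l) →
      (a :: l).getLast (List.cons_ne_nil _ _) = b → (a :: l).Nodup →
      ∃ (W : G.Walk a b) (S' : E → Option (V × V)), W.support = a :: l ∧
        (∀ e ∈ W.edges, e ∈ F ∧ (S' e = none ↔ S e ≠ none)) ∧ (∀ e ∉ W.edges, S' e = S e) ∧
        G.IsOrientation S' ∧ excess S' = excess S + unitExcess a b
  | [], a, _, _, rfl, _ => ⟨.nil a, S, rfl, by simp [Walk.edges], fun _ _ => rfl, hS,
      by simp [unitExcess]⟩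
  | c :: l, a, b, hchain, hlast, hnodup => by
    obtain ⟨⟨e, heF, he, hSe⟩, hchain⟩ := List.isChain_cons_cons.mp hchain
    obtain ⟨ha, hnodup⟩ := List.nodup_cons.mp hnodup
    obtain ⟨W, S₁, hW, hWF, hoff, hS₁, hexc⟩ := hS.exists_augmentingPath_of_isChain l (b := b)
      hchain (by rwa [List.getLast_cons_cons] at hlast) hnodup
    -- `a` is not on `W`, so neither is the edge `e` at `a`
    have heW : e ∉ W.edges := fun heW =>
      ha (hW ▸ W.mem_support_of_mem_edges heW (by simp [he]))
    obtain ⟨o, ho, hoab, hflux⟩ := exists_flux_eq_add_unitExcess hSe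
    refine ⟨.cons e he W, Function.update S₁ e o, by simp [Walk.support, hW], ?_, ?_, ?_, ?_⟩
    · intro e' he'
      rcases List.mem_cons.mp he' with rfl | he'
      · simpa [heF] using ho
      · rw [Function.update_of_ne (ne_of_mem_of_not_mem he' heW)]
        exact hWF e' he'
    · intro e' he'
      simp only [Walk.edges, List.mem_cons, not_or] at he'
      rw [Function.update_of_ne he'.1, hoff e' he'.2]
    · intro e' p q h
      by_cases he' : e' = e
      · subst he'
        obtain ⟨rfl, rfl⟩ := hoab p q (by simpa using h)
        exact he
      · exact hS₁ e' p q (by rwa [Function.update_of_ne he'] at h)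
    · rw [excess_update, hexc, hoff e heW, hflux, ← unitExcess_add_unitExcess a c b]
      abel

theorem exists_augmentingPath (hS : G.IsOrientation S) {a b : V}
    (h : ReflTransGen (G.Residual S F) a b) :
    ∃ (W : G.Walk a b) (S' : E → Option (V × V)), W.IsPath ∧
      (∀ e ∈ W.edges, e ∈ F ∧ (S' e = none ↔ S e ≠ none)) ∧ (∀ e ∉ W.edges, S' e = S e) ∧
      G.IsOrientation S' ∧ excess S' = excess S + unitExcess a b := by
  obtain ⟨l, hchain, hlast, hnodup⟩ := List.exists_nodup_isChain_of_reflTransGen h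
  obtain ⟨W, S', hW, hrest⟩ := hS.exists_augmentingPath_of_isChain l hchain hlast hnodup
  exact ⟨W, S', by rwa [Walk.IsPath, hW], hrest⟩

end IsOrientation

variable [Fintype V]

theorem sum_unitExcess (X : Set V) (a b : V) :
    ∑ w with w ∈ X, unitExcess a b w = (if b ∈ X then 1 else 0) - (if a ∈ X then 1 else 0) := by
  simp [unitExcess, sum_sub_distrib, sum_pi_single']

theorem IsFlow.sum_excess {S : E → Option (V × V)} {a b : V} {m : ℕ} (hf : G.IsFlow S a b m)
    (X : Set V) :
    ∑ w with w ∈ X, excess S w = m * ((if b ∈ X then 1 else 0) - (if a ∈ X then 1 else 0)) := by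
  simp [hf.excess_eq, ← mul_sum, sum_unitExcess]

/-- If `X` is closed under residual steps, then every edge of `F` leaving `X` carries flow
out of `X` and no flow enters `X`. -/
theorem IsOrientation.sum_excess_le {S : E → Option (V × V)} (hS : G.IsOrientation S)
    {F : Set E} (hF : ∀ e, S e ≠ none → e ∈ F) {X : Set V}
    (hX : ∀ x y, x ∈ X → G.Residual S F x y → y ∈ X) :
    ∑ w with w ∈ X, excess S w ≤ -#{e | e ∈ G.cut X ∧ e ∈ F} := by
  rw [card_filter]
  simp only [excess, Finset.sum_apply, Nat.cast_sum, Nat.cast_ite, Nat.cast_one, Nat.cast_zero,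
    ← sum_neg_distrib]
  rw [sum_comm]
  refine sum_le_sum fun e _ => ?_
  obtain ⟨p, q, h⟩ := G.exists_ends_eq e
  rcases hSe : S e with _ | ⟨a, b⟩
  · split_ifs with hcut
    · exfalso
      rcases (mem_cut_of_ends_eq h).mp hcut.1 with ⟨hp, hq⟩ | ⟨hq, hp⟩
      · exact hq (hX p q hp ⟨e, hcut.2, h, .inl hSe⟩)
      · exact hp (hX q p hq ⟨e, hcut.2, h.trans Sym2.eq_swap, .inl hSe⟩)
    · simp [flux]
  · have hab := hS e a b hSe
    have heF : e ∈ F := hF e (by simp [hSe])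
    have hba : b ∈ X → a ∈ X := fun hb =>
      hX b a hb ⟨e, heF, hab.trans Sym2.eq_swap, .inr hSe⟩
    simp only [flux, sum_unitExcess, mem_cut_of_ends_eq hab, heF, and_true]
    by_cases a ∈ X <;> by_cases b ∈ X <;> simp_all

theorem IsFlow.exists_succ {S : E → Option (V × V)} {a b : V} {m : ℕ} (hf : G.IsFlow S a b m)
    (hcut : ∀ X : Set V, a ∈ X → b ∉ X → m < #(G.cut X)) : ∃ S', G.IsFlow S' a b (m + 1) := by
  by_cases hab : ReflTransGen (G.Residual S Set.univ) a b
  · obtain ⟨W, S', -, -, -, hS', hexc⟩ := hf.isOrientation.exists_augmentingPath hab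
    refine ⟨S', hS', ?_⟩
    rw [hexc, hf.excess_eq]
    push_cast
    rw [add_smul, one_smul]
  · set X : Set V := {x | ReflTransGen (G.Residual S Set.univ) a x}
    have haX : a ∈ X := ReflTransGen.refl
    have hbX : b ∉ X := hab
    have hle := hf.isOrientation.sum_excess_le (fun e _ => Set.mem_univ e) (X := X)
      fun _ _ hx hxy => hx.tail hxy
    rw [hf.sum_excess, if_pos haX, if_neg hbX] at hle
    simp only [Set.mem_univ, and_true, filter_mem_eq_inter, univ_inter] at hle
    have := hcut X haX hab
    omega

theorem exists_isFlow_of_le_card_cut {a b : V} {k : ℕ}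
    (hcut : ∀ X : Set V, a ∈ X → b ∉ X → k ≤ #(G.cut X)) : ∃ S, G.IsFlow S a b k := by
  induction k with
  | zero => exact ⟨fun _ => none, ⟨fun _ _ _ h => (nomatch h), by simp [excess, flux]⟩⟩
  | succ m ih =>
    obtain ⟨S, hS⟩ := ih fun X ha hb => (hcut X ha hb).trans' (Nat.le_succ m)
    exact hS.exists_succ hcut

theorem IsFlow.exists_paths {u v : V} : ∀ {m : ℕ} {S : E → Option (V × V)},
    G.IsFlow S v u m → ∃ P : Fin m → G.Walk u v, (∀ i, (P i).IsPath) ∧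
      (∀ i j, i ≠ j → ∀ e, e ∈ (P i).edges → e ∉ (P j).edges) ∧
      ∀ i, ∀ e ∈ (P i).edges, S e ≠ none
  | 0, _, _ => ⟨finZeroElim, finZeroElim, finZeroElim, finZeroElim⟩
  | m + 1, S, hf => by
    have hreach : ReflTransGen (G.Residual S {e | S e ≠ none}) u v := by
      by_contra huv
      set X : Set V := {x | ReflTransGen (G.Residual S {e | S e ≠ none}) u x}
      have huX : u ∈ X := ReflTransGen.refl
      have hvX : v ∉ X := huv
      have hle := hf.isOrientation.sum_excess_le (F := {e | S e ≠ none}) (fun e he => he)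
        (X := X) fun _ _ hx hxy => hx.tail hxy
      rw [hf.sum_excess, if_pos huX, if_neg hvX] at hle
      omega
    obtain ⟨W, S', hW, hWF, hoff, hS', hexc⟩ := hf.isOrientation.exists_augmentingPath hreach
    have hWnone : ∀ e ∈ W.edges, S' e = none := fun e he => (hWF e he).2.mpr (hWF e he).1
    obtain ⟨P, hP, hdisj, hused⟩ := IsFlow.exists_paths (m := m) (S := S')
      ⟨hS', by rw [hexc, hf.excess_eq, unitExcess_swap u v]; push_cast; module⟩
    refine ⟨Fin.cons W P, Fin.cases hW hP, ?_, Fin.cases (fun e he => (hWF e he).1) ?_⟩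
    · intro i j hij e hei hej
      cases i using Fin.cases <;> cases j using Fin.cases
      · exact hij rfl
      · exact hused _ e hej (hWnone e hei)
      · exact hused _ e hei (hWnone e hej)
      · exact hdisj _ _ (fun h => hij (congrArg _ h)) e hei hej
    · intro i e he
      have heW : e ∉ W.edges := fun heW => hused i e he (hWnone e heW)
      simpa [hoff e heW] using hused i e he

/-- Menger's theorem for edge-disjoint paths. -/
theorem exists_edgeDisjoint_paths_of_le_card_cut {u v : V} {k : ℕ}
    (hcut : ∀ X : Set V, u ∈ X → v ∉ X → k ≤ #(G.cut X)) :
    ∃ P : Fin k → G.Walk u v,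
      (∀ i, (P i).IsPath) ∧ ∀ i j, i ≠ j → ∀ e, e ∈ (P i).edges → e ∉ (P j).edges := by
  -- the flow runs from `v` to `u`, so that the paths peeled off against it run from `u` to `v`
  obtain ⟨S, hS⟩ := exists_isFlow_of_le_card_cut (G := G) (a := v) (b := u) fun X hv hu => by
    simpa [card_cut_compl] using hcut Xᶜ hu (by simpa using hv)
  obtain ⟨P, hP, hdisj, -⟩ := hS.exists_paths
  exact ⟨P, hP, hdisj⟩

end Flow

variable {s : V} {k : ℕ}

def IsSCut (s : V) (X : Set V) : Prop := s ∉ X ∧ X.Nonempty ∧ ∃ w ∉ X, w ≠ s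

theorem SEdgeConnected.le_card_cut [Fintype E] (hG : G.SEdgeConnected s k) {X : Set V}
    (hX : IsSCut s X) : k ≤ #(G.cut X) := by
  obtain ⟨hsX, ⟨u, hu⟩, w, hw, hws⟩ := hX
  obtain ⟨P, -, hP⟩ := hG u w (fun h => hsX (h ▸ hu)) hws (fun h => hw (h ▸ hu))
  exact le_card_cut_of_edgeDisjoint hu hw P hP

theorem sEdgeConnected_of_le_card_cut [Fintype V] [Fintype E]
    (hcut : ∀ X, IsSCut s X → k ≤ #(G.cut X)) : G.SEdgeConnected s k := by
  intro u v hu hv _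
  refine exists_edgeDisjoint_paths_of_le_card_cut fun X huX hvX => ?_
  by_cases hsX : s ∈ X
  · rw [← card_cut_compl]
    exact hcut Xᶜ ⟨fun h => h hsX, ⟨v, hvX⟩, u, fun h => h huX, hu⟩
  · exact hcut X ⟨hsX, ⟨u, huX⟩, v, hvX, hv⟩

theorem card_cut_lift [Fintype E] {x y : V} {e₁ e₂ : E} (he : e₁ ≠ e₂)
    (hx : G.ends e₁ = s(s, x)) (hy : G.ends e₂ = s(s, y)) {Z : Set V} (hsZ : s ∉ Z) :
    #((G.lift e₁ e₂ x y).cut Z) + (if x ∈ Z then 1 else 0) + (if y ∈ Z then 1 else 0) =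
      #(G.cut Z) + (if x ∈ Z ∧ y ∉ Z ∨ y ∈ Z ∧ x ∉ Z then 1 else 0) := by
  have hold : ∀ e : {e : E // e ≠ e₁ ∧ e ≠ e₂},
      Sum.inl e ∈ (G.lift e₁ e₂ x y).cut Z ↔ e.1 ∈ G.cut Z := fun e => by
    simp [cut, edgesBetween, lift]
  have hnew : ∀ h : PLift (x ≠ y),
      Sum.inr h ∈ (G.lift e₁ e₂ x y).cut Z ↔ x ∈ Z ∧ y ∉ Z ∨ y ∈ Z ∧ x ∉ Z :=
    fun _ => mem_cut_of_ends_eq rfl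
  rw [card_eq_sum_ite (subset_univ _), Fintype.sum_sum_type,
    card_eq_sum_ite (subset_univ (G.cut Z))]
  simp only [hold, hnew]
  rw [← sum_subtype (univ \ {e₁, e₂}) (by simp) (fun e => if e ∈ G.cut Z then 1 else 0),
    ← sum_sdiff (subset_univ {e₁, e₂}), sum_pair he]
  simp only [mem_cut_of_ends_eq hx, mem_cut_of_ends_eq hy, hsZ]
  by_cases hxy : x = y
  · subst hxy
    simp [add_assoc]
  · rw [Fintype.sum_subsingleton _ ⟨hxy⟩]
    by_cases x ∈ Z <;> by_cases y ∈ Z <;> simp [*]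

section Dangerous

variable [Fintype E]

variable (G) in
def IsDangerous (s : V) (k : ℕ) (X : Set V) : Prop := IsSCut s X ∧ #(G.cut X) ≤ k + 1

theorem IsDangerous.two_mul_card_edgesBetween_le (hG : G.SEdgeConnected s k)
    (hdeg : Even (G.degree s)) {X : Set V} (hX : G.IsDangerous s k X) :
    2 * #(G.edgesBetween {s} X) ≤ G.degree s := by
  obtain ⟨⟨hsX, ⟨u, hu⟩, w, hw, hws⟩, hXk⟩ := hX
  have hcompl : k ≤ #(G.cut (insert s X)ᶜ) :=
    hG.le_card_cut ⟨by simp, ⟨w, by simp [hw, hws]⟩, u, by simp [hu], fun h => hsX (h ▸ hu)⟩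
  have hunion := G.card_cut_union_of_disjoint (Set.disjoint_singleton_left.mpr hsX)
  rw [card_cut_compl, Set.insert_eq] at hcompl
  rw [card_cut_singleton] at hunion
  obtain ⟨d, hd⟩ := hdeg
  omega

theorem IsDangerous.exists_notMem_union_ne (hG : G.SEdgeConnected s k)
    (hdeg : Even (G.degree s)) {X Y : Set V} (hX : G.IsDangerous s k X)
    (hY : G.IsDangerous s k Y) {w : V} (hwX : w ∈ X) (hwY : w ∈ Y) {e : E}
    (he : G.ends e = s(s, w)) : ∃ v ∉ X ∪ Y, v ≠ s := by
  by_contra! hall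
  have hfull := G.card_edgesBetween_singleton_eq_degree (X := X ∪ Y) fun _ v hv =>
    by_contra fun hvXY => ne_of_ends_eq hv (hall v hvXY).symm
  have hinter : 0 < #(G.edgesBetween {s} (X ∩ Y)) :=
    card_pos.mpr ⟨e, (mem_edgesBetween_of_ends_eq he).mpr (.inl ⟨rfl, hwX, hwY⟩)⟩
  have := G.card_edgesBetween_singleton_modular s X Y
  have := hX.two_mul_card_edgesBetween_le hG hdeg
  have := hY.two_mul_card_edgesBetween_le hG hdeg
  omega

theorem IsDangerous.union (hG : G.SEdgeConnected s k) (hk : Even k) (hdeg : Even (G.degree s))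
    {X Y : Set V} (hX : G.IsDangerous s k X) (hY : G.IsDangerous s k Y) {w : V} (hwX : w ∈ X)
    (hwY : w ∈ Y) {e : E} (he : G.ends e = s(s, w)) : G.IsDangerous s k (X ∪ Y) := by
  by_cases hXY : X ⊆ Y
  · rwa [Set.union_eq_self_of_subset_left hXY]
  by_cases hYX : Y ⊆ X
  · rwa [Set.union_eq_self_of_subset_right hYX]
  obtain ⟨x, hxX, hxY⟩ := Set.not_subset.mp hXY
  obtain ⟨y, hyY, hyX⟩ := Set.not_subset.mp hYX
  have hsX := hX.1.1
  have hsY := hY.1.1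
  have hws : w ≠ s := fun h => hsX (h ▸ hwX)
  refine ⟨⟨fun h => h.elim hsX hsY, ⟨w, .inl hwX⟩,
    hX.exists_notMem_union_ne hG hdeg hY hwX hwY he⟩, ?_⟩
  have hinter : k ≤ #(G.cut (X ∩ Y)) :=
    hG.le_card_cut ⟨fun h => hsX h.1, ⟨w, hwX, hwY⟩, y, fun h => hyX h.1, fun h => hsY (h ▸ hyY)⟩
  have hXdiff : k ≤ #(G.cut (X \ Y)) :=
    hG.le_card_cut ⟨fun h => hsX h.1, ⟨x, hxX, hxY⟩, w, fun h => h.2 hwY, hws⟩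
  have hYdiff : k ≤ #(G.cut (Y \ X)) :=
    hG.le_card_cut ⟨fun h => hsY h.1, ⟨y, hyY, hyX⟩, w, fun h => h.2 hwX, hws⟩
  have hedge : 0 < #(G.edgesBetween (X ∩ Y) (X ∪ Y)ᶜ) :=
    card_pos.mpr ⟨e, (mem_edgesBetween_of_ends_eq he).mpr
      (.inr ⟨⟨hwX, hwY⟩, fun h => h.elim hsX hsY⟩)⟩
  have hsub := G.card_cut_submodular X Y
  have hposi := G.card_cut_posimodular X Y
  have hsplit := G.card_cut_union_of_disjoint (Set.disjoint_sdiff_inter (s := X) (t := Y))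
  rw [Set.sdiff_union_inter] at hsplit
  have := hX.2
  have := hY.2
  -- Otherwise submodularity forces `d(X) = k + 1`, `d(X ∩ Y) = k`, posimodularity (with the edge
  -- `e` from `X ∩ Y` to `s`) forces `d(X \ Y) = k`, and then `d(X) ≡ d(X ∩ Y) + d(X \ Y)` is even.
  obtain ⟨j, rfl⟩ := hk
  omega

theorem IsDangerous.iUnion {ι : Type*} [Finite ι] [Nonempty ι] (hG : G.SEdgeConnected s k)
    (hk : Even k) (hdeg : Even (G.degree s)) {Z : ι → Set V} (hZ : ∀ i, G.IsDangerous s k (Z i))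
    {w : V} (hw : ∀ i, w ∈ Z i) {e : E} (he : G.ends e = s(s, w)) :
    G.IsDangerous s k (⋃ i, Z i) := by
  have := Fintype.ofFinite ι
  suffices ∀ t : Finset ι, t.Nonempty → G.IsDangerous s k (⋃ i ∈ t, Z i) by
    simpa using this univ univ_nonempty
  intro t ht
  induction ht using Finset.Nonempty.cons_induction with
  | singleton i => simpa using hZ i
  | cons i t _ ht ih =>
    rw [cons_eq_insert, set_biUnion_insert]
    obtain ⟨j, hj⟩ := ht
    exact (hZ i).union hG hk hdeg ih (hw i) (Set.mem_biUnion hj (hw j)) he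

theorem liftable_of_forall_isDangerous [Fintype V] (hG : G.SEdgeConnected s k)
    {e₁ e₂ : E} (he : e₁ ≠ e₂) {x y : V} (hx : G.ends e₁ = s(s, x)) (hy : G.ends e₂ = s(s, y))
    (hxy : ∀ Z, G.IsDangerous s k Z → x ∈ Z → y ∉ Z) : G.Liftable s k e₁ e₂ := by
  refine ⟨he, x, y, hx, hy, sEdgeConnected_of_le_card_cut fun Z hZ => ?_⟩
  have hlift := G.card_cut_lift he hx hy hZ.1
  have hGZ := hG.le_card_cut hZ
  by_cases hxZ : x ∈ Z <;> by_cases hyZ : y ∈ Z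
  · have : k + 1 < #(G.cut Z) := by
      by_contra! h
      exact hxy Z ⟨hZ, h⟩ hxZ hyZ
    simp only [hxZ, hyZ, if_true, not_true, and_false, or_self, if_false] at hlift
    omega
  all_goals simp [hxZ, hyZ] at hlift; omega

end Dangerous

section DangerouslyLinked

variable [Fintype E]

variable (G) in
def DangerouslyLinked (s : V) (k : ℕ) (f g : {e : E // s ∈ G.ends e}) : Prop :=
  f = g ∨ ∃ Z, G.IsDangerous s k Z ∧ Sym2.Mem.other f.2 ∈ Z ∧ Sym2.Mem.other g.2 ∈ Z

variable {f g h : {e : E // s ∈ G.ends e}}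

theorem DangerouslyLinked.trans (hG : G.SEdgeConnected s k) (hk : Even k)
    (hdeg : Even (G.degree s)) (hfg : G.DangerouslyLinked s k f g)
    (hgh : G.DangerouslyLinked s k g h) : G.DangerouslyLinked s k f h := by
  rcases hfg with rfl | ⟨Z, hZ, hfZ, hgZ⟩
  · exact hgh
  rcases hgh with rfl | ⟨Z', hZ', hgZ', hhZ'⟩
  · exact .inr ⟨Z, hZ, hfZ, hgZ⟩
  exact .inr ⟨Z ∪ Z', hZ.union hG hk hdeg hZ' hgZ hgZ' (Sym2.other_spec g.2).symm,
    .inl hfZ, .inr hhZ'⟩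

theorem liftingGraph_adj_of_not_dangerouslyLinked [Fintype V] (hG : G.SEdgeConnected s k)
    (hfg : ¬G.DangerouslyLinked s k f g) : (G.liftingGraph s k).Adj f g :=
  .inl <| liftable_of_forall_isDangerous hG (fun h => hfg (.inl (Subtype.ext h)))
    (Sym2.other_spec f.2).symm (Sym2.other_spec g.2).symm
    fun Z hZ hfZ hgZ => hfg (.inr ⟨Z, hZ, hfZ, hgZ⟩)

theorem exists_not_dangerouslyLinked (hG : G.SEdgeConnected s k) (hk : Even k)
    (hdeg : Even (G.degree s)) (hfg : f ≠ g) : ∃ h, ¬G.DangerouslyLinked s k f h := by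
  by_contra! hall
  obtain ⟨Z₁, hZ₁, hfZ₁, -⟩ := (hall g).resolve_left hfg
  have hZ : ∀ h : {e : E // s ∈ G.ends e}, ∃ Z, G.IsDangerous s k Z ∧
      Sym2.Mem.other f.2 ∈ Z ∧ Sym2.Mem.other h.2 ∈ Z := fun h =>
    (hall h).elim (fun hfh => ⟨Z₁, hZ₁, hfZ₁, hfh ▸ hfZ₁⟩) id
  choose Z hZ hfZ hhZ using hZ
  have : Nonempty {e : E // s ∈ G.ends e} := ⟨f⟩
  have hU := IsDangerous.iUnion hG hk hdeg hZ hfZ (Sym2.other_spec f.2).symm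
  have hfull := G.card_edgesBetween_singleton_eq_degree (X := ⋃ h, Z h) fun e w hew => by
    have hse : s ∈ G.ends e := hew ▸ Sym2.mem_mk_left s w
    rw [← Sym2.congr_right.mp ((Sym2.other_spec hse).trans hew)]
    exact Set.mem_iUnion.mpr ⟨⟨e, hse⟩, hhZ _⟩
  have hpos : 0 < G.degree s := (Set.ncard_pos).mpr ⟨f.1, f.2⟩
  have := hU.two_mul_card_edgesBetween_le hG hdeg
  omega

end DangerouslyLinked

end Multigraph

theorem lifting_graph_even_degree_general {V : Type u} {E : Type v} [Finite V] [Finite E]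
    (G : Multigraph V E) (s : V) (k : ℕ)
    (hke : Even k)
    (hG : G.SEdgeConnected s k)
    (heven : Even (G.degree s)) (hpos : 0 < G.degree s) :
    ¬ ((G.liftingGraph s k)ᶜ).Connected := by
  have := Fintype.ofFinite V
  have := Fintype.ofFinite E
  obtain ⟨f, g, hfg⟩ : ∃ f g : {e : E // s ∈ G.ends e}, f ≠ g := by
    obtain ⟨e, e', he, he', hne⟩ := (Set.one_lt_ncard_iff).mp (show 1 < G.degree s by
      obtain ⟨d, hd⟩ := heven
      omega)
    exact ⟨⟨e, he⟩, ⟨e', he'⟩, fun h => hne (congrArg Subtype.val h)⟩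
  obtain ⟨h, hfh⟩ := Multigraph.exists_not_dangerouslyLinked hG hke heven hfg
  intro hconn
  obtain ⟨d, -, hd₁, hd₂⟩ := (hconn.preconnected f h).some.exists_boundary_dart
    {g | G.DangerouslyLinked s k f g} (.inl rfl) hfh
  exact ((SimpleGraph.compl_adj _ _ _).mp d.adj).2 <|
    Multigraph.liftingGraph_adj_of_not_dangerouslyLinked hG fun h => hd₂ (hd₁.trans hG hke heven h)

/-- **Lemma (Ok–Richter–Thomassen / Jordán).** Let `k` be a positive even integer and
`s` a vertex of an `(s,k)`-edge-connected finite graph `G`. If `deg(s)` is even and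
positive, then the complement of `L(G,s,k)` is disconnected. -/
theorem lifting_graph_even_degree {V : Type u} {E : Type v} [Finite V] [Finite E]
    (G : Multigraph V E) (s : V) (k : ℕ)
    (hk : 0 < k) (hke : Even k)
    (hG : G.SEdgeConnected s k)
    (heven : Even (G.degree s)) (hpos : 0 < G.degree s) :
    ¬ ((G.liftingGraph s k)ᶜ).Connected :=
  lifting_graph_even_degree_general G s k hke hG heven hpos
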